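/- Let n > 1 be a composite integer and let S be a Schur partition of the cyclic group ℤ/nℤ such that the only subgroups of ℤ/nℤ that are unions of blocks of S are the trivial subgroup and ℤ/nℤ itself. Then S is the trivial Schur partition {{0}, (ℤ/nℤ) ∖ {0}}. -/

import Mathlib

open scoped Pointwise

noncomputable def classSum {G : Type*} [AddCommGroup G] (C : Set G) :
    AddMonoidAlgebra ℚ G :=
  ∑ᶠ g ∈ C, AddMonoidAlgebra.single g (1 : ℚ)

def IsSchurPartition {G : Type*} [AddCommGroup G] (P : Set (Set G)) : Prop :=
  Setoid.IsPartition P ∧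
  ({0} : Set G) ∈ P ∧
  (∀ C ∈ P, -C ∈ P) ∧
  ∀ C ∈ P, ∀ D ∈ P,
    classSum C * classSum D ∈ AddSubmonoid.closure (classSum '' P)

noncomputable def Omega (n : ℕ) : ℕ :=
  Nat.card {P : Set (Set (ZMod n)) // IsSchurPartition P}

/-- `A` is a union of blocks of the partition `P`: every block meeting `A` lies in `A`. -/
def IsBlockUnion {G : Type*} (P : Set (Set G)) (A : Set G) : Prop :=
  ∀ C ∈ P, (C ∩ A).Nonempty → C ⊆ A

/-!
Let `G` be finite cyclic, `p ∣ |G|` a prime with `p < |G|`, and `G[p] = {z | p • z = 0}`, a subgroup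
of order `p`. A nontrivial block `T` generates an `S`-subgroup, hence all of `G`. Since
`T ^ p ≡ ∑_{t ∈ T} (p • t) (mod p)` in `ℤ[G]`, the `u` hit a number of times prime to `p` by
`t ↦ p • t` on `T` form a union of blocks inside the proper subgroup `p • G`, so none is nonzero.
As each fibre of `t ↦ p • t` has at most `p` points, `T ∖ G[p]` is a union of `G[p]`-cosets; were
`T` disjoint from `G[p]`, its stabiliser would be a nonzero, hence full, `S`-subgroup. So the block
of any `y ≠ 0` contains some `x ∈ G[p]`, and the coefficient of `y` in `T T⁻¹`, equal to that of
`x`, is at least `|T ∖ G[p]|`. Summing over `y` gives `|T|² ≥ |T| + (|G| - 1) |T ∖ G[p]|`, which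
with `|T ∩ G[p]| < p ≤ |T ∖ G[p]|` forces `2 |T| ≥ |G|`: two disjoint nontrivial blocks cannot
both be that large.
-/

open Finset
open scoped Classical

lemma AddMonoidAlgebra.coeff_sum_single_one {R M ι : Type*} [Semiring R] (s : Finset ι)
    (f : ι → M) (x : M) :
    (∑ i ∈ s, single (f i) (1 : R)).coeff x = #{i ∈ s | f i = x} := by
  simp only [coeff_sum, Finset.sum_apply', coeff_single, Finsupp.single_apply, Finset.card_filter,
    Nat.cast_sum, Nat.cast_ite, Nat.cast_one, Nat.cast_zero]

section ClassSum

variable {G : Type*} [AddCommGroup G] [Fintype G]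

lemma classSum_eq_sum (C : Set G) :
    classSum C = ∑ g ∈ C.toFinset, AddMonoidAlgebra.single g (1 : ℚ) := by
  rw [classSum, ← finsum_mem_coe_finset, Set.coe_toFinset]

lemma classSum_eq_map (C : Set G) :
    classSum C = AddMonoidAlgebra.mapRingHom G (Nat.castRingHom ℚ)
      (∑ g ∈ C.toFinset, AddMonoidAlgebra.single g 1) := by
  simp [classSum_eq_sum]

lemma classSum_coeff (C : Set G) (x : G) :
    (classSum C).coeff x = if x ∈ C then 1 else 0 := by
  simp [classSum_eq_sum, AddMonoidAlgebra.coeff_sum, Finsupp.single_apply]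

lemma classSum_mul_classSum_coeff (A B : Set G) (x : G) :
    (classSum A * classSum B).coeff x = #{q ∈ A.toFinset ×ˢ B.toFinset | q.1 + q.2 = x} := by
  simp only [classSum_eq_sum, Finset.sum_mul_sum, AddMonoidAlgebra.single_mul_single, one_mul,
    ← Finset.sum_product']
  exact AddMonoidAlgebra.coeff_sum_single_one _ (fun q : G × G => q.1 + q.2) x

lemma classSum_mul_classSum_neg_coeff (T : Set G) (y : G) :
    (classSum T * classSum (-T)).coeff y = #{a ∈ T.toFinset | a - y ∈ T} := by
  rw [classSum_mul_classSum_coeff]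
  congr 1
  refine Finset.card_nbij' Prod.fst (fun a => (a, y - a)) ?_ ?_ ?_ ?_
  · rintro ⟨a, b⟩ hq
    simp only [coe_filter, Set.mem_ofPred_eq, mem_product, Set.mem_toFinset, Set.mem_neg] at hq ⊢
    rw [← hq.2, sub_add_cancel_left]
    exact hq.1
  · intro a ha
    simp only [coe_filter, Set.mem_ofPred_eq, mem_product, Set.mem_toFinset, Set.mem_neg] at ha ⊢
    rw [neg_sub]
    exact ⟨⟨ha.1, ha.2⟩, add_sub_cancel a y⟩
  · rintro ⟨a, b⟩ hq
    simp only [coe_filter, Set.mem_ofPred_eq] at hq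
    simp [← hq.2]
  · intro a _
    rfl

lemma sum_card_filter_sub_mem (T : Set G) :
    ∑ y, #{a ∈ T.toFinset | a - y ∈ T} = #T.toFinset ^ 2 := by
  have hreflect (a : G) : #{y | a - y ∈ T} = #T.toFinset :=
    card_nbij' (a - ·) (a - ·) (fun y hy => by simpa using hy) (fun b hb => by simpa using hb)
      (fun y _ => sub_sub_cancel a y) (fun b _ => sub_sub_cancel a b)
  calc ∑ y, #{a ∈ T.toFinset | a - y ∈ T}
      = ∑ a ∈ T.toFinset, #{y | a - y ∈ T} := by simp only [card_filter]; exact sum_comm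
    _ = #T.toFinset ^ 2 := by simp [hreflect, sq]

lemma classSum_pow_coeff_modEq (T : Set G) (p : ℕ) [Fact p.Prime] {x y : G}
    (h : (classSum T ^ p).coeff x = (classSum T ^ p).coeff y) :
    #{t ∈ T.toFinset | p • t = x} ≡ #{t ∈ T.toFinset | p • t = y} [MOD p] := by
  set X : AddMonoidAlgebra ℕ G := ∑ g ∈ T.toFinset, AddMonoidAlgebra.single g 1
  have : CharP (AddMonoidAlgebra (ZMod p) G) p :=
    charP_of_injective_algebraMap (R := ZMod p) AddMonoidAlgebra.single_right_injective p
  -- Over `ZMod p`, Frobenius turns `X ^ p` into `∑ t ∈ T, single (p • t) 1`.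
  have hfrob (v : G) : ((X ^ p).coeff v : ZMod p) = #{t ∈ T.toFinset | p • t = v} := by
    rw [← Nat.coe_castRingHom, ← AddMonoidAlgebra.coeff_mapRingHom, map_pow]
    simp only [X, map_sum, AddMonoidAlgebra.mapRingHom_single, map_one, sum_pow_char,
      AddMonoidAlgebra.single_pow, one_pow]
    exact AddMonoidAlgebra.coeff_sum_single_one _ _ v
  rw [classSum_eq_map, ← map_pow, AddMonoidAlgebra.coeff_mapRingHom,
    AddMonoidAlgebra.coeff_mapRingHom] at h
  have hX : (X ^ p).coeff x = (X ^ p).coeff y := Nat.cast_injective h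
  rw [← ZMod.natCast_eq_natCast_iff, ← hfrob, ← hfrob, hX]

end ClassSum

namespace IsSchurPartition

variable {G : Type*} [AddCommGroup G] {S : Set (Set G)} (hS : IsSchurPartition S)
include hS

theorem eq_of_mem {C D : Set G} (hC : C ∈ S) (hD : D ∈ S) {x : G} (hxC : x ∈ C)
    (hxD : x ∈ D) : C = D :=
  Setoid.eq_of_mem_eqv_class hS.1.2 hC hxC hD hxD

theorem exists_mem (x : G) : ∃ C ∈ S, x ∈ C :=
  (hS.1.2 x).exists

theorem nonempty {C : Set G} (hC : C ∈ S) : C.Nonempty :=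
  Set.nonempty_iff_ne_empty.2 fun h => hS.1.1 (h ▸ hC)

theorem eq_zero_of_zero_mem {C : Set G} (hC : C ∈ S) (h0 : (0 : G) ∈ C) : C = {0} :=
  hS.eq_of_mem hC hS.2.1 h0 rfl

theorem zero_notMem {C : Set G} (hC : C ∈ S) (hC0 : C ≠ {0}) : (0 : G) ∉ C :=
  fun h0 => hC0 (hS.eq_zero_of_zero_mem hC h0)

theorem exists_ne_zero {C : Set G} (hC : C ∈ S) (hC0 : C ≠ {0}) : ∃ x ∈ C, x ≠ 0 := by
  by_contra! h
  exact hC0 (Set.eq_singleton_iff_nonempty_unique_mem.2 ⟨hS.nonempty hC, h⟩)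

noncomputable def schurRing : Subsemiring (AddMonoidAlgebra ℚ G) where
  toAddSubmonoid := AddSubmonoid.closure (classSum '' S)
  one_mem' := by
    have : classSum ({0} : Set G) = 1 := by
      rw [classSum, finsum_mem_singleton]; rfl
    exact AddSubmonoid.subset_closure ⟨{0}, hS.2.1, this⟩
  mul_mem' {x y} hx hy := by
    have hmul : AddSubmonoid.closure (classSum '' S) * AddSubmonoid.closure (classSum '' S)
        ≤ AddSubmonoid.closure (classSum '' S) := by
      rw [AddSubmonoid.closure_mul_closure, AddSubmonoid.closure_le]
      rintro _ ⟨_, ⟨C, hC, rfl⟩, _, ⟨D, hD, rfl⟩, rfl⟩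
      exact hS.2.2.2 C hC D hD
    exact hmul (AddSubmonoid.mul_mem_mul hx hy)

theorem classSum_mem {C : Set G} (hC : C ∈ S) : classSum C ∈ hS.schurRing :=
  AddSubmonoid.subset_closure ⟨C, hC, rfl⟩

theorem classSum_mul_mem {C D : Set G} (hC : C ∈ S) (hD : D ∈ S) :
    classSum C * classSum D ∈ hS.schurRing :=
  hS.2.2.2 C hC D hD

theorem eq_pair_of_forall_eq [Nontrivial G]
    (h : ∀ C ∈ S, ∀ D ∈ S, C ≠ {0} → D ≠ {0} → C = D) : S = {{0}, {0}ᶜ} := by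
  have hne {C : Set G} (hC : C ∈ S) {x : G} (hx : x ∈ C) (hx0 : x ≠ 0) : C ≠ {0} :=
    fun h0 => hx0 (Set.mem_singleton_iff.1 (h0 ▸ hx))
  obtain ⟨x, hx0⟩ := exists_ne (0 : G)
  obtain ⟨D, hD, hxD⟩ := hS.exists_mem x
  have hD_eq : D = {0}ᶜ := by
    ext y
    refine ⟨fun hy h0 => hS.zero_notMem hD (hne hD hxD hx0) (h0 ▸ hy), fun hy0 => ?_⟩
    obtain ⟨E, hE, hyE⟩ := hS.exists_mem y
    exact h E hE D hD (hne hE hyE hy0) (hne hD hxD hx0) ▸ hyE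
  ext C
  refine ⟨fun hC => ?_, ?_⟩
  · by_cases h0 : (0 : G) ∈ C
    · exact Or.inl (hS.eq_zero_of_zero_mem hC h0)
    · refine Or.inr (hD_eq ▸ h C hC D hD (fun hC0 => h0 (hC0 ▸ rfl)) (hne hD hxD hx0))
  · rintro (rfl | rfl)
    · exact hS.2.1
    · exact hD_eq ▸ hD

variable [Fintype G]

theorem coeff_eq_of_mem {z : AddMonoidAlgebra ℚ G} (hz : z ∈ hS.schurRing) {C : Set G}
    (hC : C ∈ S) {x y : G} (hx : x ∈ C) (hy : y ∈ C) : z.coeff x = z.coeff y := by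
  induction hz using AddSubmonoid.closure_induction with
  | mem _ hw =>
    obtain ⟨D, hD, rfl⟩ := hw
    have hxy : x ∈ D ↔ y ∈ D :=
      ⟨fun h => hS.eq_of_mem hD hC h hx ▸ hy, fun h => hS.eq_of_mem hD hC h hy ▸ hx⟩
    simp [classSum_coeff, hxy]
  | zero => rfl
  | add a b _ _ ha hb => simp [AddMonoidAlgebra.coeff_add, ha, hb]

theorem isBlockUnion_preimage_coeff {z : AddMonoidAlgebra ℚ G} (hz : z ∈ hS.schurRing)
    (A : Set ℚ) : IsBlockUnion S (z.coeff ⁻¹' A) := by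
  rintro C hC ⟨y, hyC, hyA⟩ x hx
  rwa [Set.mem_preimage, hS.coeff_eq_of_mem hz hC hx hyC]

theorem isBlockUnion_add {C D : Set G} (hC : C ∈ S) (hD : D ∈ S) : IsBlockUnion S (C + D) := by
  convert hS.isBlockUnion_preimage_coeff (hS.classSum_mul_mem hC hD) {0}ᶜ using 1
  ext x
  simp [classSum_mul_classSum_coeff, Set.mem_add]

theorem isBlockUnion_closure {T : Set G} (hT : T ∈ S) :
    IsBlockUnion S (AddSubgroup.closure T : Set G) := by
  set J : AddSubgroup G := AddSubgroup.closure T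
  let A : AddSubgroup G :=
    { carrier := {x | ∀ C ∈ S, x ∈ C → C ⊆ J}
      zero_mem' := fun C hC h0 => by
        rw [hS.eq_zero_of_zero_mem hC h0, Set.singleton_subset_iff]
        exact J.zero_mem
      add_mem' := fun {x y} hx hy C hC hxy => by
        obtain ⟨Cx, hCx, hxCx⟩ := hS.exists_mem x
        obtain ⟨Cy, hCy, hyCy⟩ := hS.exists_mem y
        have hCxy : C ⊆ Cx + Cy :=
          hS.isBlockUnion_add hCx hCy C hC ⟨x + y, hxy, Set.add_mem_add hxCx hyCy⟩
        rintro _ hz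
        obtain ⟨a, ha, b, hb, rfl⟩ := hCxy hz
        exact J.add_mem (hx Cx hCx hxCx ha) (hy Cy hCy hyCy hb)
      neg_mem' := fun {x} hx C hC hnx z hz => by
        have hCJ := hx (-C) (hS.2.2.1 C hC) (by simpa using hnx)
        simpa using J.neg_mem (hCJ (Set.neg_mem_neg.2 hz)) }
  have hJA : J ≤ A := (AddSubgroup.closure_le A).2 fun t ht C hC htC =>
    hS.eq_of_mem hC hT htC ht ▸ AddSubgroup.subset_closure
  rintro C hC ⟨x, hxC, hxJ⟩
  exact hJA hxJ C hC hxC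

theorem isBlockUnion_stabilizer {T : Set G} (hT : T ∈ S) :
    IsBlockUnion S (AddAction.stabilizer G T : Set G) := by
  have hstab : (AddAction.stabilizer G T : Set G) =
      (classSum T * classSum (-T)).coeff ⁻¹' {(#T.toFinset : ℚ)} := by
    ext y
    rw [SetLike.mem_coe, AddAction.mem_stabilizer_set_iff_subset_vadd_set T.toFinite,
      Set.mem_preimage, classSum_mul_classSum_neg_coeff, Set.mem_singleton_iff, Nat.cast_inj,
      card_filter_eq_iff]
    simp [Set.subset_def, Set.mem_vadd_set_iff_neg_vadd_mem, neg_add_eq_sub]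
  rw [hstab]
  exact hS.isBlockUnion_preimage_coeff (hS.classSum_mul_mem hT (hS.2.2.1 T hT)) _

end IsSchurPartition

section NsmulFibers

variable {G : Type*} [AddCommGroup G] [Fintype G] {p : ℕ}

theorem exists_ne_zero_nsmul_eq_zero [Fact p.Prime] (hpG : p ∣ Fintype.card G) :
    ∃ y : G, y ≠ 0 ∧ p • y = 0 := by
  obtain ⟨y, hy⟩ := exists_prime_addOrderOf_dvd_card p hpG
  refine ⟨y, fun h => ?_, hy ▸ addOrderOf_nsmul_eq_zero y⟩
  rw [h, addOrderOf_zero] at hy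
  exact (Fact.out : p.Prime).one_lt.ne hy

theorem nsmulAddMonoidHom_range_ne_top [Fact p.Prime] (hpG : p ∣ Fintype.card G) :
    (nsmulAddMonoidHom p : G →+ G).range ≠ ⊤ := by
  intro htop
  obtain ⟨y, hy0, hy⟩ := exists_ne_zero_nsmul_eq_zero hpG
  have hinj : Function.Injective (nsmulAddMonoidHom p : G →+ G) :=
    Finite.injective_iff_surjective.2 (AddMonoidHom.range_eq_top.1 htop)
  exact hy0 (hinj (by simpa using hy))

theorem card_filter_nsmul_eq_le [IsAddCyclic G] (hp : 0 < p) (w : G) :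
    #{z | p • z = p • w} ≤ p := by
  refine le_trans ?_ (IsAddCyclic.card_nsmul_eq_zero_le (α := G) hp)
  refine card_le_card_of_injOn (· - w) (fun z hz => ?_) (fun a _ b _ h => sub_left_inj.1 h)
  simp_all [smul_sub]

end NsmulFibers

def IsPrimitiveSchurPartition {G : Type*} [AddCommGroup G] (S : Set (Set G)) : Prop :=
  IsSchurPartition S ∧ ∀ H : AddSubgroup G, IsBlockUnion S (H : Set G) → H = ⊥ ∨ H = ⊤

namespace IsPrimitiveSchurPartition

variable {G : Type*} [AddCommGroup G] [Fintype G] {S : Set (Set G)}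
  (hS : IsPrimitiveSchurPartition S) {p : ℕ} [Fact p.Prime] {T : Set G}
include hS

theorem eq_top_of_subset (hT : T ∈ S) (hT0 : T ≠ {0}) {H : AddSubgroup G} (hTH : T ⊆ H) :
    H = ⊤ := by
  obtain ⟨x, hxT, hx0⟩ := hS.1.exists_ne_zero hT hT0
  rcases hS.2 _ (hS.1.isBlockUnion_closure hT) with h | h
  · have hx : x ∈ AddSubgroup.closure T := AddSubgroup.subset_closure hxT
    rw [h, AddSubgroup.mem_bot] at hx
    exact absurd hx hx0
  · exact eq_top_iff.2 (h ▸ (AddSubgroup.closure_le H).2 hTH)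

theorem dvd_card_filter_nsmul_eq (hpG : p ∣ Fintype.card G) (hT : T ∈ S) {u : G}
    (hu : u ≠ 0) : p ∣ #{t ∈ T.toFinset | p • t = u} := by
  by_contra hu_not
  set W : Set G := {v | ¬ p ∣ #{t ∈ T.toFinset | p • t = v}}
  have hW : IsBlockUnion S W := by
    rintro C hC ⟨y, hyC, hyW⟩ x hx hdx
    have hpow := hS.1.schurRing.pow_mem (hS.1.classSum_mem hT) p
    have hmod := classSum_pow_coeff_modEq T p (hS.1.coeff_eq_of_mem hpow hC hx hyC)
    exact hyW ((hmod.dvd_iff dvd_rfl).1 hdx)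
  obtain ⟨C, hC, huC⟩ := hS.1.exists_mem u
  have hCW := hW C hC ⟨u, huC, hu_not⟩
  have hCp : C ⊆ (nsmulAddMonoidHom p : G →+ G).range := fun v hv => by
    obtain ⟨t, ht⟩ := card_pos.1 (Nat.pos_of_ne_zero fun h0 => hCW hv (h0 ▸ dvd_zero p))
    exact ⟨t, (mem_filter.1 ht).2⟩
  exact nsmulAddMonoidHom_range_ne_top hpG
    (hS.eq_top_of_subset hC (fun h => hu (Set.mem_singleton_iff.1 (h ▸ huC))) hCp)

theorem le_card_filter_nsmul_eq (hpG : p ∣ Fintype.card G) (hT : T ∈ S) {w : G} (hw : w ∈ T)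
    (hw0 : p • w ≠ 0) : p ≤ #{t ∈ T.toFinset | p • t = p • w} :=
  Nat.le_of_dvd (card_pos.2 ⟨w, by simp [hw]⟩) (hS.dvd_card_filter_nsmul_eq hpG hT hw0)

theorem add_mem_of_nsmul_eq_zero [IsAddCyclic G] (hpG : p ∣ Fintype.card G) (hT : T ∈ S)
    {w : G} (hw : w ∈ T) (hw0 : p • w ≠ 0) {z : G} (hz : p • z = 0) : w + z ∈ T := by
  -- The fibre of `p • ·` through `w` has at most `p` points, at least `p` of which lie in `T`.
  have hfiber :
      ({t ∈ T.toFinset | p • t = p • w} : Finset G) = ({t | p • t = p • w} : Finset G) :=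
    eq_of_subset_of_card_le (filter_subset_filter _ (subset_univ _))
      ((card_filter_nsmul_eq_le (Fact.out : p.Prime).pos w).trans
        (hS.le_card_filter_nsmul_eq hpG hT hw hw0))
  have hwz : w + z ∈ ({t | p • t = p • w} : Finset G) := by simp [smul_add, hz]
  rw [← hfiber, mem_filter, Set.mem_toFinset] at hwz
  exact hwz.1

theorem exists_mem_nsmul_eq_zero [IsAddCyclic G] (hpG : p ∣ Fintype.card G) (hT : T ∈ S)
    (hT0 : T ≠ {0}) : ∃ x ∈ T, p • x = 0 := by
  -- Otherwise `T` is a union of `G[p]`-cosets, so its stabiliser is a nonzero `S`-subgroup.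
  by_contra! hT_free
  obtain ⟨y, hy0, hy⟩ := exists_ne_zero_nsmul_eq_zero hpG
  have hy_stab : y ∈ AddAction.stabilizer G T := by
    refine AddAction.mem_stabilizer_set.2 fun x => ⟨fun hyx => ?_, fun hx => ?_⟩
    · simpa using
        hS.add_mem_of_nsmul_eq_zero hpG hT hyx (hT_free _ hyx) (z := -y) (by simp [hy])
    · rw [vadd_eq_add, add_comm]
      exact hS.add_mem_of_nsmul_eq_zero hpG hT hx (hT_free x hx) hy
  rcases hS.2 _ (hS.1.isBlockUnion_stabilizer hT) with h | h
  · rw [h, AddSubgroup.mem_bot] at hy_stab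
    exact hy0 hy_stab
  · obtain ⟨x, hx⟩ := hS.1.nonempty hT
    have hx_stab : -x ∈ AddAction.stabilizer G T := h ▸ AddSubgroup.mem_top _
    have h0 : (0 : G) ∈ T := by
      simpa using (AddAction.mem_stabilizer_set.1 hx_stab x).2 hx
    exact hT0 (hS.1.eq_zero_of_zero_mem hT h0)

theorem card_filter_nsmul_ne_zero_le [IsAddCyclic G] (hpG : p ∣ Fintype.card G) (hT : T ∈ S)
    {y : G} (hy : y ≠ 0) : #{a ∈ T.toFinset | p • a ≠ 0} ≤ #{a ∈ T.toFinset | a - y ∈ T} := by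
  obtain ⟨C, hC, hyC⟩ := hS.1.exists_mem y
  obtain ⟨x, hxC, hx⟩ :=
    hS.exists_mem_nsmul_eq_zero hpG hC fun h => hy (Set.mem_singleton_iff.1 (h ▸ hyC))
  have hxy : #{a ∈ T.toFinset | a - y ∈ T} = #{a ∈ T.toFinset | a - x ∈ T} := by
    have := hS.1.coeff_eq_of_mem (hS.1.classSum_mul_mem hT (hS.1.2.2.1 T hT)) hC hyC hxC
    rwa [classSum_mul_classSum_neg_coeff, classSum_mul_classSum_neg_coeff, Nat.cast_inj] at this
  rw [hxy]
  refine card_le_card fun a ha => ?_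
  simp only [mem_filter, Set.mem_toFinset] at ha ⊢
  refine ⟨ha.1, ?_⟩
  simpa [sub_eq_add_neg] using
    hS.add_mem_of_nsmul_eq_zero hpG hT ha.1 ha.2 (z := -x) (by simp [hx])

theorem card_filter_nsmul_eq_zero_lt [IsAddCyclic G] (hpG : p ∣ Fintype.card G)
    (hpG' : p < Fintype.card G) (hT : T ∈ S) (hT0 : T ≠ {0}) :
    #{a ∈ T.toFinset | p • a = 0} < #{a ∈ T.toFinset | p • a ≠ 0} := by
  have hp := (Fact.out : p.Prime).pos
  have htorsion : #{a ∈ T.toFinset | p • a = 0} < p := by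
    have hsub : {a ∈ T.toFinset | p • a = 0} ⊆ ({z | p • z = 0} : Finset G) :=
      filter_subset_filter _ (subset_univ _)
    refine lt_of_lt_of_le (card_lt_card ?_) (IsAddCyclic.card_nsmul_eq_zero_le hp)
    exact (ssubset_iff_of_subset hsub).2 ⟨0, by simp, by simp [hS.1.zero_notMem hT hT0]⟩
  obtain ⟨w, hwT, hw0⟩ : ∃ w ∈ T, p • w ≠ 0 := by
    by_contra! hT_torsion
    have htop :=
      hS.eq_top_of_subset hT hT0 (H := (nsmulAddMonoidHom p : G →+ G).ker) hT_torsion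
    have hall : ({z | p • z = 0} : Finset G) = univ :=
      filter_true_of_mem fun z _ => by simpa using htop.ge (AddSubgroup.mem_top z)
    have := IsAddCyclic.card_nsmul_eq_zero_le (α := G) hp
    rw [hall, card_univ] at this
    omega
  calc #{a ∈ T.toFinset | p • a = 0} < p := htorsion
    _ ≤ #{t ∈ T.toFinset | p • t = p • w} := hS.le_card_filter_nsmul_eq hpG hT hwT hw0
    _ ≤ #{a ∈ T.toFinset | p • a ≠ 0} := card_le_card fun t ht => by
      simp only [mem_filter] at ht ⊢
      exact ⟨ht.1, ht.2 ▸ hw0⟩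

theorem card_add_mul_le_sq [IsAddCyclic G] (hpG : p ∣ Fintype.card G) (hT : T ∈ S) :
    #T.toFinset + (Fintype.card G - 1) * #{a ∈ T.toFinset | p • a ≠ 0} ≤ #T.toFinset ^ 2 := by
  set b := #{a ∈ T.toFinset | p • a ≠ 0}
  set g : G → ℕ := fun y => #{a ∈ T.toFinset | a - y ∈ T}
  have hg0 : g 0 = #T.toFinset := by
    simp only [g, sub_zero, Set.mem_toFinset.symm, filter_mem_eq_inter, inter_self]
  calc #T.toFinset + (Fintype.card G - 1) * b
      = g 0 + ∑ _y ∈ univ.erase (0 : G), b := by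
        rw [hg0, sum_const, card_erase_of_mem (mem_univ _), card_univ, smul_eq_mul]
    _ ≤ g 0 + ∑ y ∈ univ.erase (0 : G), g y :=
        Nat.add_le_add_left (sum_le_sum fun y hy =>
          hS.card_filter_nsmul_ne_zero_le hpG hT (ne_of_mem_erase hy)) _
    _ = ∑ y, g y := by rw [add_comm, sum_erase_add _ _ (mem_univ _)]
    _ = #T.toFinset ^ 2 := sum_card_filter_sub_mem T

theorem card_le_two_mul_card [IsAddCyclic G] (hpG : p ∣ Fintype.card G)
    (hpG' : p < Fintype.card G) (hT : T ∈ S) (hT0 : T ≠ {0}) :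
    Fintype.card G ≤ 2 * #T.toFinset := by
  have hsplit := card_filter_add_card_filter_not (s := T.toFinset) (fun a => p • a = 0)
  have hlt := hS.card_filter_nsmul_eq_zero_lt hpG hpG' hT hT0
  have hsq := hS.card_add_mul_le_sq hpG hT
  set t := #T.toFinset
  set b := #{a ∈ T.toFinset | p • a ≠ 0}
  by_contra! hsmall
  have : t * (1 + 2 * b) ≤ t * t := by
    calc t * (1 + 2 * b) = t + 2 * t * b := by ring
      _ ≤ t + (Fintype.card G - 1) * b := by gcongr; omega
      _ ≤ t * t := by rw [← sq]; exact hsq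
  have := Nat.le_of_mul_le_mul_left this (by omega)
  omega

theorem eq_of_ne_singleton_zero [IsAddCyclic G] (hpG : p ∣ Fintype.card G)
    (hpG' : p < Fintype.card G) {C D : Set G} (hC : C ∈ S) (hD : D ∈ S) (hC0 : C ≠ {0})
    (hD0 : D ≠ {0}) : C = D := by
  by_contra hCD
  have hdisj : Disjoint C.toFinset D.toFinset := disjoint_left.2 fun x hxC hxD =>
    hCD (hS.1.eq_of_mem hC hD (Set.mem_toFinset.1 hxC) (Set.mem_toFinset.1 hxD))
  have hsub : C.toFinset ∪ D.toFinset ⊆ univ.erase 0 := fun x hx => by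
    refine mem_erase.2 ⟨?_, mem_univ x⟩
    rintro rfl
    simp [hS.1.zero_notMem hC hC0, hS.1.zero_notMem hD hD0] at hx
  have hcard := card_le_card hsub
  rw [card_union_of_disjoint hdisj, card_erase_of_mem (mem_univ _), card_univ] at hcard
  have := hS.card_le_two_mul_card hpG hpG' hC hC0
  have := hS.card_le_two_mul_card hpG hpG' hD hD0
  omega

theorem eq_trivial [IsAddCyclic G] (hpG : p ∣ Fintype.card G) (hpG' : p < Fintype.card G) :
    S = {{0}, {0}ᶜ} :=
  have : Nontrivial G :=
    Fintype.one_lt_card_iff_nontrivial.1 ((Fact.out : p.Prime).one_lt.trans hpG')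
  hS.1.eq_pair_of_forall_eq fun _ hC _ hD hC0 hD0 =>
    hS.eq_of_ne_singleton_zero hpG hpG' hC hD hC0 hD0

end IsPrimitiveSchurPartition

/-- A primitive Schur partition of `ℤ/nℤ` for composite `n > 1` is the trivial one. -/
theorem primitive_composite_trivial (n : ℕ) (hn : 1 < n) (hcomp : ¬ n.Prime)
    (S : Set (Set (ZMod n))) (hS : IsSchurPartition S)
    (hprim : ∀ H : AddSubgroup (ZMod n),
      IsBlockUnion S (H : Set (ZMod n)) → H = ⊥ ∨ H = ⊤) :
    S = {({0} : Set (ZMod n)), ({0}ᶜ : Set (ZMod n))} := by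
  have : NeZero n := ⟨by omega⟩
  have : Fact n.minFac.Prime := ⟨Nat.minFac_prime (by omega)⟩
  refine IsPrimitiveSchurPartition.eq_trivial ⟨hS, hprim⟩ (p := n.minFac) ?_ ?_
  · rw [ZMod.card]
    exact n.minFac_dvd
  · rw [ZMod.card]
    exact (Nat.not_prime_iff_minFac_lt hn).1 hcomp
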